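/- If N = q^k * n^2 is an odd perfect number in Eulerian form, then q·σ(q) ≠ n·σ(n). -/

import Mathlib

/-- The sum-of-divisors function. -/
def sigma (n : ℕ) : ℕ := ∑ d ∈ n.divisors, d

/-- The abundancy index as a rational number. -/
noncomputable def Iq (x : ℕ) : ℚ := (sigma x : ℚ) / x

/-- The abundancy index as a real number. -/
noncomputable def Ir (x : ℕ) : ℝ := (sigma x : ℝ) / x

/-!
Write `σ(n) = q t`, which is possible because `q` is coprime to `n` and divides `n σ(n) = q (q + 1)`;
then `n t = q + 1` and `(q + 1) σ(n) = q t² n`. For `t = 1` this forces `σ(n) < n`,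
for `t ≥ 2` it forces `σ(n) ≥ 2n`; the latter contradicts the deficiency of `n`, which comes from
`I(n) ≤ I(n²) < I(q^k) I(n²) = 2`.
-/

lemma sigma_eq_sum_properDivisors_add_self (n : ℕ) :
    sigma n = ∑ d ∈ n.properDivisors, d + n :=
  Nat.sum_divisors_eq_sum_properDivisors_add_self

lemma le_sigma_self (n : ℕ) : n ≤ sigma n := by
  rw [sigma_eq_sum_properDivisors_add_self]
  exact Nat.le_add_left n _

lemma lt_sigma_self {n : ℕ} (hn : 1 < n) : n < sigma n := by
  have hone : 1 ∈ n.properDivisors := Nat.one_mem_properDivisors_iff_one_lt.mpr hn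
  have : 1 ≤ ∑ d ∈ n.properDivisors, d := Finset.single_le_sum (fun d _ => Nat.zero_le d) hone
  rw [sigma_eq_sum_properDivisors_add_self]
  omega

lemma Nat.Prime.sigma_eq {p : ℕ} (hp : p.Prime) : sigma p = p + 1 := by
  rw [sigma_eq_sum_properDivisors_add_self, hp.properDivisors, Finset.sum_singleton, add_comm]

lemma sigma_mul_of_coprime {m n : ℕ} (h : m.Coprime n) :
    sigma (m * n) = sigma m * sigma n :=
  Nat.Coprime.sum_divisors_mul h

lemma mul_sigma_le_sigma_mul (m n : ℕ) : m * sigma n ≤ sigma (m * n) := by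
  rcases Nat.eq_zero_or_pos m with rfl | hm
  · simp
  calc m * sigma n = ∑ d ∈ n.divisors.map ⟨(m * ·), mul_right_injective₀ hm.ne'⟩, d := by
        rw [Finset.sum_map, sigma, Finset.mul_sum]; rfl
    _ ≤ sigma (m * n) := by
        refine Finset.sum_le_sum_of_subset fun d hd => ?_
        obtain ⟨e, he, rfl⟩ := Finset.mem_map.mp hd
        obtain ⟨hen, hn⟩ := Nat.mem_divisors.mp he
        exact Nat.mem_divisors.mpr ⟨mul_dvd_mul_left m hen, mul_ne_zero hm.ne' hn⟩

lemma sigma_lt_two_mul_of_sigma_mul_lt {m n : ℕ} (h : sigma (m * n) < 2 * (m * n)) :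
    sigma n < 2 * n := by
  have : m * sigma n < m * (2 * n) := by linarith [mul_sigma_le_sigma_mul m n]
  exact Nat.lt_of_mul_lt_mul_left this

lemma sigma_lt_two_mul_of_perfect_coprime_mul {m n : ℕ} (hmn : m.Coprime n) (hm : 1 < m)
    (hperf : sigma (m * n) = 2 * (m * n)) : sigma n < 2 * n := by
  have hn : n ≠ 0 := by
    rintro rfl
    exact hm.ne' (Nat.coprime_zero_right m |>.mp hmn)
  have hσn : 0 < sigma n := (Nat.pos_of_ne_zero hn).trans_le (le_sigma_self n)
  have hprod : sigma m * sigma n = m * (2 * n) := by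
    rw [← sigma_mul_of_coprime hmn, hperf]; ring
  have : m * sigma n < m * (2 * n) :=
    hprod ▸ Nat.mul_lt_mul_of_pos_right (lt_sigma_self hm) hσn
  exact Nat.lt_of_mul_lt_mul_left this

lemma mul_sigma_ne_mul_succ_of_coprime {p n : ℕ} (hp : p ≠ 0) (hpn : p.Coprime n)
    (hdef : sigma n < 2 * n) : n * sigma n ≠ p * (p + 1) := by
  intro h
  obtain ⟨t, ht⟩ : p ∣ sigma n :=
    hpn.dvd_of_dvd_mul_left ⟨p + 1, h⟩
  have hnt : n * t = p + 1 := by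
    apply Nat.eq_of_mul_eq_mul_left (Nat.pos_of_ne_zero hp)
    rw [← h, ht]; ring
  have hscaled : (p + 1) * sigma n = p * t ^ 2 * n := by
    rw [← hnt, ht]; ring
  have hle := le_sigma_self n
  rcases Nat.lt_or_ge t 2 with ht2 | ht2
  · interval_cases t <;> nlinarith
  · nlinarith

theorem stmt7_general (q k n N : ℕ)
    (hq : Nat.Prime q) (hk4 : k % 4 = 1)
    (hco : Nat.Coprime q n) (hN : N = q ^ k * n ^ 2)
    (hperf : sigma N = 2 * N) :
    q * sigma q ≠ n * sigma n := by
  have hk : k ≠ 0 := by omega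
  have hn2 : sigma (n ^ 2) < 2 * n ^ 2 :=
    sigma_lt_two_mul_of_perfect_coprime_mul ((hco.pow_left k).pow_right 2)
      (Nat.one_lt_pow hk hq.one_lt) (hN ▸ hperf)
  have hn : sigma n < 2 * n := sigma_lt_two_mul_of_sigma_mul_lt (m := n) (by rwa [← sq])
  rw [hq.sigma_eq]
  exact (mul_sigma_ne_mul_succ_of_coprime hq.ne_zero hco hn).symm

theorem stmt7 (q k n N : ℕ)
    (hq : Nat.Prime q) (hq4 : q % 4 = 1) (hk4 : k % 4 = 1)
    (hco : Nat.Coprime q n) (hN : N = q ^ k * n ^ 2)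
    (hodd : Odd N) (hperf : sigma N = 2 * N) :
    q * sigma q ≠ n * sigma n :=
  stmt7_general q k n N hq hk4 hco hN hperf
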